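/- Let φ be a real number with |φ| < 1. Then for every fixed pair of natural-number indices i, j, the sequence n ↦ (A_n(φ)⁻¹)_{i j} (defined for all n > max(i,j)) converges, as n → ∞, to (1/(2√(1−φ²)))·(φ/(1+√(1−φ²)))^{|i−j|}. -/

import Mathlib

open Matrix Filter Topology

/-- The unscaled conditional autoregressive (CAR) precision matrix of the ring graph on
`n` vertices: entries are `2` on the diagonal, `-φ` at positions with `|i - j| = 1` or
`|i - j| = n - 1`, and `0` otherwise. -/
noncomputable def ringA (n : ℕ) (φ : ℝ) : Matrix (Fin n) (Fin n) ℝ :=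
  Matrix.of fun i j =>
    if i = j then 2
    else if Nat.dist i.val j.val = 1 ∨ Nat.dist i.val j.val = n - 1 then -φ
    else 0

/-! `ringA n φ` is the circulant matrix with first column `(2, -φ, 0, …, 0, -φ)`. With
`s = √(1 - φ²)` and `r = φ / (1 + s)`, the root of `φ r² - 2 r + φ = 0` in `(-1, 1)`, both `r ^ k`
and `r ^ (n - k)` solve the homogeneous recurrence `2 u k = φ (u (k - 1) + u (k + 1))`; their sum is
symmetric under `k ↦ n - k`, hence periodic on the ring, and the defect at `k = 0` is
`2 s (1 - r ^ n)`. So `(ringA n φ)⁻¹` is the circulant matrix with first column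
`(r ^ k + r ^ (n - k)) / (2 s (1 - r ^ n))`, which tends to `r ^ k / (2 s)` as `n → ∞`. -/

theorem Fin.val_sub_eq_dist_or {n : ℕ} (i j : Fin n) :
    (i - j).val = Nat.dist i j ∨ (i - j).val = n - Nat.dist i j := by
  unfold Nat.dist
  rcases le_or_gt j i with hji | hij
  · left; rw [Fin.coe_sub_iff_le.mpr hji]; omega
  · right; rw [Fin.coe_sub_iff_lt.mpr hij]; omega

theorem Fin.sub_eq_one_or_neg_one_iff {n : ℕ} (i j : Fin (n + 2)) :
    (i - j = 1 ∨ i - j = -1) ↔ (Nat.dist i j = 1 ∨ Nat.dist i j = n + 1) := by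
  have hdist : Nat.dist i j < n + 2 := by unfold Nat.dist; omega
  have hlt := (i - j).isLt
  rw [Fin.ext_iff, Fin.ext_iff (a := i - j), Fin.val_one, Fin.coe_neg_one]
  rcases Fin.val_sub_eq_dist_or i j with h | h <;> omega

theorem ringA_eq_circulant (n : ℕ) (φ : ℝ) :
    ringA (n + 3) φ = circulant (Pi.single 0 2 - Pi.single 1 φ - Pi.single (-1) φ) := by
  ext i j
  simp only [ringA, of_apply, circulant_apply, Pi.sub_apply, Pi.single_apply,
    ← sub_eq_zero (a := i), show n + 3 - 1 = n + 1 + 1 from rfl, ← Fin.sub_eq_one_or_neg_one_iff]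
  have h1 : (1 : Fin (n + 3)) ≠ -1 := by simp [Fin.ext_iff, Fin.coe_neg_one]
  generalize i - j = k
  by_cases hk0 : k = 0
  · simp [hk0]
  by_cases hk1 : k = 1
  · simp [hk1, h1]
  by_cases hk2 : k = -1
  · simp [hk2, h1.symm]
  · simp [*]

noncomputable def ringGreen (n : ℕ) (r s : ℝ) (k : ℕ) : ℝ :=
  (r ^ k + r ^ (n - k)) / (2 * s * (1 - r ^ n))

section
variable {φ r s : ℝ} {n : ℕ}

theorem ringGreen_sub {k : ℕ} (hk : k ≤ n) : ringGreen n r s (n - k) = ringGreen n r s k := by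
  rw [ringGreen, ringGreen, Nat.sub_sub_self hk, add_comm]

theorem ringGreen_recurrence (hφ : φ = r * (1 + s)) (hr : φ * r = 1 - s) {k : ℕ}
    (hk : k + 2 ≤ n) :
    2 * ringGreen n r s (k + 1) - φ * (ringGreen n r s k + ringGreen n r s (k + 2)) = 0 := by
  obtain ⟨m, rfl⟩ := Nat.exists_eq_add_of_le hk
  simp only [ringGreen, show k + 2 + m - k = m + 2 by omega,
    show k + 2 + m - (k + 1) = m + 1 by omega, show k + 2 + m - (k + 2) = m by omega]
  have hnum :
      2 * (r ^ (k + 1) + r ^ (m + 1)) - φ * ((r ^ k + r ^ (m + 2)) + (r ^ (k + 2) + r ^ m)) = 0 := by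
    linear_combination (-(r ^ k + r ^ m)) * hφ - (r ^ k + r ^ m) * r * hr
  rw [← zero_div (2 * s * (1 - r ^ (k + 2 + m))), ← hnum]
  ring

theorem ringGreen_boundary (hφ : φ = r * (1 + s)) (hr : φ * r = 1 - s) (hs : s ≠ 0)
    (hrn : r ^ n ≠ 1) (hn : 1 ≤ n) :
    2 * ringGreen n r s 0 - φ * (ringGreen n r s 1 + ringGreen n r s 1) = 1 := by
  obtain ⟨m, rfl⟩ := Nat.exists_eq_add_of_le' hn
  have hden : 1 - r ^ (m + 1) ≠ 0 := sub_ne_zero.mpr hrn.symm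
  simp only [ringGreen, Nat.sub_zero, Nat.add_sub_cancel, pow_zero, pow_one]
  field_simp
  linear_combination (-2 : ℝ) * hr - 2 * r ^ m * hφ

theorem ringGreen_circulant_equation (hφ : φ = r * (1 + s)) (hr : φ * r = 1 - s) (hs : s ≠ 0)
    (hrn : r ^ (n + 3) ≠ 1) (d : Fin (n + 3)) :
    2 * ringGreen (n + 3) r s d -
        φ * (ringGreen (n + 3) r s ↑(d + 1) + ringGreen (n + 3) r s ↑(d - 1)) =
      if d = 0 then 1 else 0 := by
  have hsucc : ringGreen (n + 3) r s ↑(d + 1) = ringGreen (n + 3) r s (d + 1) := by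
    rw [Fin.val_add_one]
    split_ifs with hd
    · rw [hd, Fin.val_last]
      exact (ringGreen_sub (Nat.zero_le _)).symm
    · rfl
  have hpred : ringGreen (n + 3) r s ↑(d - 1) =
      if d = 0 then ringGreen (n + 3) r s 1 else ringGreen (n + 3) r s (d - 1) := by
    rw [Fin.coe_sub_one]
    split_ifs
    · exact ringGreen_sub (k := 1) (by omega)
    · rfl
  rw [hsucc, hpred]
  split_ifs with hd
  · subst hd
    exact ringGreen_boundary hφ hr hs hrn (by omega)
  · obtain ⟨k, hk⟩ := Nat.exists_eq_add_one.mpr (Fin.pos_of_ne_zero hd)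
    rw [hk, add_comm (ringGreen _ _ _ _)]
    exact ringGreen_recurrence hφ hr (by omega)

theorem ringGreen_val_sub (i j : Fin n) :
    ringGreen n r s ↑(i - j) = ringGreen n r s (Nat.dist i j) := by
  rcases Fin.val_sub_eq_dist_or i j with h | h
  · rw [h]
  · rw [h, ringGreen_sub]
    unfold Nat.dist
    omega

theorem inv_ringA (hφ : φ = r * (1 + s)) (hr : φ * r = 1 - s) (hs : s ≠ 0)
    (hrn : r ^ (n + 3) ≠ 1) :
    (ringA (n + 3) φ)⁻¹ = circulant fun d : Fin (n + 3) => ringGreen (n + 3) r s d := by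
  refine inv_eq_left_inv ?_
  rw [ringA_eq_circulant, circulant_mul, ← circulant_single_one]
  congr 1
  funext d
  simp [mulVec_sub, mulVec_single, circulant_apply, Pi.single_apply]
  linear_combination ringGreen_circulant_equation hφ hr hs hrn d

theorem tendsto_ringGreen (habs : |r| < 1) (hs : s ≠ 0) (k : ℕ) :
    Tendsto (fun n => ringGreen n r s k) atTop (𝓝 (r ^ k / (2 * s))) := by
  have hpow := tendsto_pow_atTop_nhds_zero_of_abs_lt_one habs
  have hlim : Tendsto (fun n => ringGreen n r s k) atTop (𝓝 ((r ^ k + 0) / (2 * s * (1 - 0)))) :=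
    (tendsto_const_nhds.add (hpow.comp (tendsto_sub_atTop_nat k))).div
      (tendsto_const_nhds.mul (tendsto_const_nhds.sub hpow)) (by simpa using hs)
  simpa using hlim

end

/-- Theorem E.5: for `|φ| < 1`, the `(i,j)` entry of `A_n(φ)⁻¹` converges, as `n → ∞`, to
`(1/(2√(1-φ²))) (φ/(1+√(1-φ²)))^{|i-j|}`. -/
theorem limiting_ringA_inv_entries (φ : ℝ) (hφ : |φ| < 1) (i j : ℕ) :
    Tendsto
      (fun n : ℕ =>
        if h : i < n ∧ j < n then (ringA n φ)⁻¹ ⟨i, h.1⟩ ⟨j, h.2⟩ else 0)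
      atTop
      (𝓝 ((1 / (2 * Real.sqrt (1 - φ ^ 2))) *
        (φ / (1 + Real.sqrt (1 - φ ^ 2))) ^ Nat.dist i j)) := by
  have hsq : φ ^ 2 < 1 := (sq_lt_one_iff_abs_lt_one φ).mpr hφ
  set s := Real.sqrt (1 - φ ^ 2)
  set r := φ / (1 + s)
  have hs : 0 < s := Real.sqrt_pos.mpr (by linarith)
  have h1s : 0 < 1 + s := by linarith
  have hφr : φ = r * (1 + s) := (div_mul_cancel₀ φ h1s.ne').symm
  have hs2 : s ^ 2 = 1 - φ ^ 2 := Real.sq_sqrt (by linarith)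
  have hr : φ * r = 1 - s :=
    mul_right_cancel₀ h1s.ne' (by linear_combination (-φ) * hφr + hs2)
  have habs : |r| < 1 := by
    rw [abs_div, abs_of_pos h1s, div_lt_one h1s]
    linarith
  rw [one_div_mul_eq_div]
  refine (tendsto_add_atTop_iff_nat 3).mp
    (((tendsto_ringGreen habs hs.ne' _).comp (tendsto_add_atTop_nat 3)).congr' ?_)
  filter_upwards [eventually_ge_atTop (max i j)] with n hn
  have hin : i < n + 3 ∧ j < n + 3 := by omega
  have hrn : r ^ (n + 3) ≠ 1 := fun h => by
    simpa [← abs_pow, h] using pow_lt_one₀ (abs_nonneg r) habs (n := n + 3) (by omega)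
  rw [Function.comp_apply, dif_pos hin, inv_ringA hφr hr hs.ne' hrn, circulant_apply,
    ringGreen_val_sub]
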